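/- arXiv:2603.18287 — 4 statements merged into one kernel-verified Lean document; each statement's English description precedes it below -/
import Mathlib

section
/- Let E be a real topological vector space with topological dual E', let C ⊆ E be a convex cone, and let σ, ρ ∈ E'. Assume σ is strictly positive on C, i.e., ⟨f, σ⟩ > 0 for all f ∈ C with f ≠ 0. Define α := inf {⟨f, ρ⟩ : f ∈ C, ⟨f, σ⟩ = 1} and ω := sup {s ∈ ℝ : ρ − s·σ ∈ C*}. Then α ≤ ω, and hence (combined with weak duality) α = ω. -/
/-- Strong duality under strict positivity of `σ` on the convex cone `C`:
the infimum `α = inf {⟨f,ρ⟩ : f ∈ C, ⟨f,σ⟩ = 1}` equals the supremum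
`ω = sup {s : ρ - sσ ∈ C*}` (computed in `EReal`, so that `inf ∅ = ⊤`, `sup ∅ = ⊥`). -/
theorem strong_duality_strict_positive {E : Type*} [AddCommGroup E] [Module ℝ E]
    [TopologicalSpace E]
    (C : Set E) (hCconv : Convex ℝ C) (hCcone : ∀ f ∈ C, ∀ t : ℝ, 0 < t → t • f ∈ C)
    (ρ σ : E →L[ℝ] ℝ)
    (hσ : ∀ f ∈ C, f ≠ 0 → 0 < σ f) :
    sInf {x : EReal | ∃ f ∈ C, σ f = 1 ∧ x = (ρ f : EReal)}
      = sSup {x : EReal | ∃ s : ℝ, (∀ c ∈ C, 0 ≤ ρ c - s * σ c) ∧ x = (s : EReal)} := by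
  apply le_antisymm
  · -- strong duality: inf ≤ sup
    apply le_of_forall_gt_imp_ge_of_dense
    intro a ha
    induction a using EReal.rec with
    | bot => exact absurd ha (by simp)
    | top => exact le_top
    | coe s =>
      -- since sSup < s, s is not dual-feasible: some c ∈ C has ρ c < s * σ c
      have hs : ¬ (∀ c ∈ C, 0 ≤ ρ c - s * σ c) := by
        intro h
        exact absurd (le_sSup (Set.mem_setOf.mpr ⟨s, h, rfl⟩)) (not_le.mpr ha)
      push_neg at hs
      obtain ⟨c, hc, hlt⟩ := hs
      have hc0 : c ≠ 0 := by
        rintro rfl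
        simp at hlt
      have hσc : 0 < σ c := hσ c hc hc0
      have hρc : ρ c < s * σ c := by linarith
      set f := (σ c)⁻¹ • c with hf
      have hfC : f ∈ C := hCcone c hc _ (inv_pos.mpr hσc)
      have hσf : σ f = 1 := by simp [hf, inv_mul_cancel₀ hσc.ne']
      have hρf : ρ f < s := by
        have : (σ c)⁻¹ * ρ c < (σ c)⁻¹ * (s * σ c) :=
          (mul_lt_mul_iff_right₀ (inv_pos.mpr hσc)).mpr hρc
        have h2 : (σ c)⁻¹ * (s * σ c) = s := by field_simp
        rw [h2] at this
        simpa [hf] using this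
      calc sInf {x : EReal | ∃ f ∈ C, σ f = 1 ∧ x = (ρ f : EReal)}
          ≤ (ρ f : EReal) := sInf_le ⟨f, hfC, hσf, rfl⟩
        _ ≤ (s : EReal) := by exact_mod_cast hρf.le
  · -- weak duality: sup ≤ inf
    apply sSup_le
    rintro x ⟨s, hs, rfl⟩
    apply le_sInf
    rintro y ⟨f, hfC, hσf, rfl⟩
    have := hs f hfC
    rw [hσf] at this
    exact_mod_cast (by linarith : s ≤ ρ f)
end

section
/- Let X be a real locally convex space and let P, Q ⊆ X be closed convex cones with 0 ∈ P ∩ Q. If the interior of P intersects Q (i.e., there exists a point of Q lying in the interior of P), then (P ∩ Q)* = P* + Q*, where for a cone C the dual cone is C* = {φ ∈ X' : ⟨c, φ⟩ ≥ 0 for all c ∈ C}. -/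
/-!
Restrict `φ` to the diagonal of `X × X` and extend it, by M. Riesz's extension theorem, to a
linear functional `G` that is nonnegative on the cone `P × Q`; then `φ = G(·, 0) + G(0, ·)`.
Riesz's theorem needs every point of `X × X` to be pushed into `P × Q` by a diagonal vector,
i.e. `X = P - Q`, which holds because `Q` meets the interior of `P`. The summand nonnegative on
`P` is continuous since a linear functional bounded below on an open set is, and the other one
is `φ` minus it.
-/

open Filter Set Topology

theorem exists_pos_add_smul_mem_of_mem_interior {E : Type*} [AddCommGroup E] [Module ℝ E]
    [TopologicalSpace E] [ContinuousAdd E] [ContinuousSMul ℝ E] {s : Set E} {x : E}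
    (hx : x ∈ interior s) (y : E) : ∃ t : ℝ, 0 < t ∧ x + t • y ∈ s := by
  have hcont : Continuous fun t : ℝ => x + t • y := by fun_prop
  have hnear : ∀ᶠ t : ℝ in 𝓝 0, x + t • y ∈ s :=
    hcont.continuousAt.preimage_mem_nhds (by simpa using mem_interior_iff_mem_nhds.mp hx)
  obtain ⟨t, hts, ht⟩ :=
    ((hnear.filter_mono nhdsWithin_le_nhds).and (self_mem_nhdsWithin (s := Ioi 0))).exists
  exact ⟨t, ht, hts⟩

theorem LinearMap.continuous_of_nonneg_on_of_nonempty_interior {E : Type*} [AddCommGroup E]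
    [Module ℝ E] [TopologicalSpace E] [IsTopologicalAddGroup E] [ContinuousSMul ℝ E] {s : Set E}
    (f : E →ₗ[ℝ] ℝ) (hf : ∀ x ∈ s, 0 ≤ f x) (hs : (interior s).Nonempty) : Continuous f := by
  by_cases hzero : f = 0
  · rw [hzero]
    exact continuous_zero
  obtain ⟨x, hx⟩ : ∃ x, f x ≠ 0 := by
    by_contra! h
    exact hzero (LinearMap.ext h)
  set x₁ := (f x)⁻¹ • x
  have hfx₁ : f x₁ = 1 := by simp [x₁, inv_mul_cancel₀ hx]
  refine f.continuous_of_nonzero_on_open ((x₁ + ·) '' interior s)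
    ((isOpenMap_add_left x₁) _ isOpen_interior) (hs.image _) ?_
  rintro _ ⟨y, hy, rfl⟩
  have := hf y (interior_subset hy)
  rw [map_add, hfx₁]
  positivity

namespace PointedCone

variable {E : Type*} [AddCommGroup E] [Module ℝ E]

def ofConvex (s : Set E) (hs : Convex ℝ s) (hsmul : ∀ x ∈ s, ∀ t : ℝ, 0 ≤ t → t • x ∈ s)
    (hne : s.Nonempty) : PointedCone ℝ E :=
  .ofConeComb s hne fun x hx y hy a ha b hb => by
    -- `a • x + b • y` is twice the midpoint of `(2 * a) • x` and `(2 * b) • y`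
    have hmid := hs (hsmul x hx (2 * a) (by positivity)) (hsmul y hy (2 * b) (by positivity))
      (by norm_num : (0 : ℝ) ≤ 1 / 2) (by norm_num : (0 : ℝ) ≤ 1 / 2) (by norm_num)
    convert hmid using 1
    module

theorem exists_linearMap_add_eq_of_nonneg_on_inf (P Q : PointedCone ℝ E)
    (hPQ : ∀ y, ∃ p ∈ P, ∃ q ∈ Q, p - q = y) (φ : E →ₗ[ℝ] ℝ) (hφ : ∀ x ∈ P ⊓ Q, 0 ≤ φ x) :
    ∃ f g : E →ₗ[ℝ] ℝ, (∀ x ∈ P, 0 ≤ f x) ∧ (∀ x ∈ Q, 0 ≤ g x) ∧ f + g = φ := by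
  let diagonal := LinearMap.range (LinearMap.id.prod LinearMap.id : E →ₗ[ℝ] E × E)
  let φdiag : E × E →ₗ.[ℝ] ℝ := ⟨diagonal, (φ ∘ₗ LinearMap.fst ℝ E E).domRestrict diagonal⟩
  have nonneg : ∀ z : φdiag.domain, (z : E × E) ∈ P.prod Q → 0 ≤ φdiag z := by
    rintro ⟨_, x, rfl⟩ ⟨hxP, hxQ⟩
    exact hφ x ⟨hxP, hxQ⟩
  have dense : ∀ y : E × E, ∃ z : φdiag.domain, (z : E × E) + y ∈ P.prod Q := by
    rintro ⟨y₁, y₂⟩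
    obtain ⟨p, hp, q, hq, hpq⟩ := hPQ (y₁ - y₂)
    refine ⟨⟨(p - y₁, p - y₁), p - y₁, rfl⟩, ?_, ?_⟩
    · simpa using hp
    · have : p - y₁ + y₂ = q := by rw [sub_add, ← hpq, sub_sub_cancel]
      simpa [this] using hq
  obtain ⟨G, hGφ, hG⟩ := riesz_extension (P.prod Q) φdiag nonneg dense
  refine ⟨G ∘ₗ LinearMap.inl ℝ E E, G ∘ₗ LinearMap.inr ℝ E E,
    fun x hx => hG _ ⟨hx, Q.zero_mem⟩, fun x hx => hG _ ⟨P.zero_mem, hx⟩, ?_⟩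
  ext x
  simpa [← map_add, φdiag] using hGφ ⟨(x, x), x, rfl⟩

variable [TopologicalSpace E] [IsTopologicalAddGroup E] [ContinuousSMul ℝ E]
  (P Q : PointedCone ℝ E) {x₀ : E}

theorem exists_sub_eq_of_mem_interior (hx₀P : x₀ ∈ interior (P : Set E)) (hx₀Q : x₀ ∈ Q)
    (y : E) : ∃ p ∈ P, ∃ q ∈ Q, p - q = y := by
  obtain ⟨t, ht, hty⟩ := exists_pos_add_smul_mem_of_mem_interior hx₀P y
  refine ⟨t⁻¹ • (x₀ + t • y), P.smul_mem (inv_nonneg.2 ht.le) hty,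
    t⁻¹ • x₀, Q.smul_mem (inv_nonneg.2 ht.le) hx₀Q, ?_⟩
  rw [smul_add, smul_smul, inv_mul_cancel₀ ht.ne', one_smul, add_sub_cancel_left]

theorem exists_continuousLinearMap_add_eq_of_nonneg_on_inf (hx₀P : x₀ ∈ interior (P : Set E))
    (hx₀Q : x₀ ∈ Q) (φ : E →L[ℝ] ℝ) (hφ : ∀ x ∈ P ⊓ Q, 0 ≤ φ x) :
    ∃ f g : E →L[ℝ] ℝ, (∀ x ∈ P, 0 ≤ f x) ∧ (∀ x ∈ Q, 0 ≤ g x) ∧ f + g = φ := by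
  obtain ⟨f, g, hf, hg, hfg⟩ :=
    exists_linearMap_add_eq_of_nonneg_on_inf P Q (exists_sub_eq_of_mem_interior P Q hx₀P hx₀Q)
      φ hφ
  have hfc : Continuous f := f.continuous_of_nonneg_on_of_nonempty_interior hf ⟨x₀, hx₀P⟩
  have hgc : Continuous g := by
    rw [eq_sub_of_add_eq' hfg]
    exact φ.continuous.sub hfc
  exact ⟨⟨f, hfc⟩, ⟨g, hgc⟩, hf, hg, ContinuousLinearMap.coe_injective hfg⟩

end PointedCone

theorem dual_cone_intersection_interior_general {X : Type*} [AddCommGroup X] [Module ℝ X]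
    [TopologicalSpace X] [IsTopologicalAddGroup X] [ContinuousSMul ℝ X]
    (P Q : Set X)
    (hPconv : Convex ℝ P) (hQconv : Convex ℝ Q)
    (hPcone : ∀ x ∈ P, ∀ t : ℝ, 0 ≤ t → t • x ∈ P)
    (hQcone : ∀ x ∈ Q, ∀ t : ℝ, 0 ≤ t → t • x ∈ Q)
    (h0 : (0 : X) ∈ P ∩ Q)
    (hint : (interior P ∩ Q).Nonempty) :
    {φ : X →L[ℝ] ℝ | ∀ c ∈ P ∩ Q, 0 ≤ φ c}
      = {φ : X →L[ℝ] ℝ | ∃ φP φQ : X →L[ℝ] ℝ,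
          (∀ c ∈ P, 0 ≤ φP c) ∧ (∀ c ∈ Q, 0 ≤ φQ c) ∧ φ = φP + φQ} := by
  ext φ
  constructor
  · intro hφ
    obtain ⟨x₀, hx₀P, hx₀Q⟩ := hint
    let coneP := PointedCone.ofConvex P hPconv hPcone ⟨0, h0.1⟩
    let coneQ := PointedCone.ofConvex Q hQconv hQcone ⟨0, h0.2⟩
    obtain ⟨φP, φQ, hφP, hφQ, hsum⟩ :=
      coneP.exists_continuousLinearMap_add_eq_of_nonneg_on_inf coneQ hx₀P hx₀Q φ hφ
    exact ⟨φP, φQ, hφP, hφQ, hsum.symm⟩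
  · rintro ⟨φP, φQ, hφP, hφQ, rfl⟩ c ⟨hcP, hcQ⟩
    exact add_nonneg (hφP c hcP) (hφQ c hcQ)

/-- Dual cone intersection formula: if `P`, `Q` are closed convex cones in a real locally
convex space with `0 ∈ P ∩ Q` and the interior of `P` intersects `Q`,
then `(P ∩ Q)* = P* + Q*`. -/
theorem dual_cone_intersection_interior {X : Type*} [AddCommGroup X] [Module ℝ X]
    [TopologicalSpace X] [IsTopologicalAddGroup X] [ContinuousSMul ℝ X]
    [LocallyConvexSpace ℝ X]
    (P Q : Set X)
    (hPc : IsClosed P) (hQc : IsClosed Q)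
    (hPconv : Convex ℝ P) (hQconv : Convex ℝ Q)
    (hPcone : ∀ x ∈ P, ∀ t : ℝ, 0 ≤ t → t • x ∈ P)
    (hQcone : ∀ x ∈ Q, ∀ t : ℝ, 0 ≤ t → t • x ∈ Q)
    (h0 : (0 : X) ∈ P ∩ Q)
    (hint : (interior P ∩ Q).Nonempty) :
    {φ : X →L[ℝ] ℝ | ∀ c ∈ P ∩ Q, 0 ≤ φ c}
      = {φ : X →L[ℝ] ℝ | ∃ φP φQ : X →L[ℝ] ℝ,
          (∀ c ∈ P, 0 ≤ φP c) ∧ (∀ c ∈ Q, 0 ≤ φQ c) ∧ φ = φP + φQ} :=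
  dual_cone_intersection_interior_general P Q hPconv hQconv hPcone hQcone h0 hint
end

section
/- Let G be a compactly generated LCA group with tile B and lattice L, and X = C^{1,∞}(G;ℝ) the mixed norm space. Then the space C_c(G;ℝ) of compactly supported continuous real functions is dense in X with respect to the norm ‖f‖_X = ∑_{ℓ∈L} ‖f|_{B+ℓ}‖_∞. -/
open MeasureTheory

/-- The sup of `|f|` over the translated tile `B + ℓ`. -/
noncomputable def cellSup {G : Type*} [Add G] (B : Set G) (ℓ : G) (f : G → ℝ) : ℝ :=
  sSup ((fun x => |f x|) '' ((fun b => b + ℓ) '' B))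

/-- Membership in the mixed-norm space `X = C^{1,∞}(G;ℝ)` associated with the lattice `L`
and the tile `B`: `f` is continuous and `∑_{ℓ∈L} ‖f|_{B+ℓ}‖_∞ < ∞`. -/
def MemX {G : Type*} [AddCommGroup G] [TopologicalSpace G]
    (L : AddSubgroup G) (B : Set G) (f : G → ℝ) : Prop :=
  Continuous f ∧
    (∀ ℓ : L, BddAbove ((fun x => |f x|) '' ((fun b => b + (ℓ : G)) '' B))) ∧
    Summable (fun ℓ : L => cellSup B (ℓ : G) f)

/-- The mixed norm `‖f‖_X = ∑_{ℓ∈L} ‖f|_{B+ℓ}‖_∞`. -/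
noncomputable def normX {G : Type*} [AddCommGroup G] [TopologicalSpace G]
    (L : AddSubgroup G) (B : Set G) (f : G → ℝ) : ℝ :=
  ∑' ℓ : L, cellSup B (ℓ : G) f

/-! Cut `f` off by an Urysohn function `φ` with `0 ≤ φ ≤ 1` that equals `1` on the finitely many
closed cells `closure B + ℓ`, `ℓ ∈ F`, carrying all but `ε` of `‖f‖_X`. Then `φ f` has compact
support, both `φ f` and `f - φ f` are pointwise dominated by `|f|`, and `f - φ f` vanishes on the
cells indexed by `F`, so `‖f - φ f‖_X` is at most the tail `∑_{ℓ ∉ F} ‖f|_{B+ℓ}‖_∞ < ε`. -/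

open Set

section Cell

variable {G : Type*} [Add G] {B : Set G} {ℓ : G} {f g : G → ℝ}

lemma cellSup_nonneg : 0 ≤ cellSup B ℓ f :=
  Real.sSup_nonneg (by rintro x ⟨y, -, rfl⟩; exact abs_nonneg _)

lemma cellSup_mem_upperBounds_of_abs_le
    (hf : BddAbove ((fun x => |f x|) '' ((fun b => b + ℓ) '' B))) (h : ∀ x, |g x| ≤ |f x|) :
    cellSup B ℓ f ∈ upperBounds ((fun x => |g x|) '' ((fun b => b + ℓ) '' B)) := by
  rintro y ⟨x, hx, rfl⟩
  exact (h x).trans (le_csSup hf ⟨x, hx, rfl⟩)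

lemma cellSup_le_of_abs_le (hf : BddAbove ((fun x => |f x|) '' ((fun b => b + ℓ) '' B)))
    (h : ∀ x, |g x| ≤ |f x|) : cellSup B ℓ g ≤ cellSup B ℓ f :=
  Real.sSup_le (cellSup_mem_upperBounds_of_abs_le hf h) cellSup_nonneg

lemma cellSup_eq_zero (h : ∀ b ∈ B, g (b + ℓ) = 0) : cellSup B ℓ g = 0 := by
  refine le_antisymm (Real.sSup_le ?_ le_rfl) cellSup_nonneg
  rintro y ⟨-, ⟨b, hb, rfl⟩, rfl⟩
  simp [h b hb]

end Cell

section MixedNorm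

variable {G : Type*} [AddCommGroup G] [TopologicalSpace G] {L : AddSubgroup G} {B : Set G}
  {f g : G → ℝ}

lemma MemX.summable_of_abs_le (hf : MemX L B f) (h : ∀ x, |g x| ≤ |f x|) :
    Summable fun ℓ : L => cellSup B (ℓ : G) g :=
  hf.2.2.of_nonneg_of_le (fun _ => cellSup_nonneg) fun ℓ => cellSup_le_of_abs_le (hf.2.1 ℓ) h

lemma MemX.of_abs_le (hf : MemX L B f) (hg : Continuous g) (h : ∀ x, |g x| ≤ |f x|) :
    MemX L B g :=
  ⟨hg, fun ℓ => ⟨_, cellSup_mem_upperBounds_of_abs_le (hf.2.1 ℓ) h⟩, hf.summable_of_abs_le h⟩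

lemma normX_le_tsum_compl_of_abs_le (hf : MemX L B f) (h : ∀ x, |g x| ≤ |f x|) (F : Finset L)
    (hF : ∀ ℓ ∈ F, ∀ b ∈ B, g (b + ℓ) = 0) :
    normX L B g ≤ ∑' ℓ : {ℓ : L // ℓ ∉ F}, cellSup B (ℓ : G) f := by
  have hsupp : Function.support (fun ℓ : L => cellSup B (ℓ : G) g) ⊆ {ℓ | ℓ ∉ F} :=
    fun ℓ hℓ hmem => hℓ (cellSup_eq_zero (hF ℓ hmem))
  rw [normX, ← tsum_subtype_eq_of_support_subset hsupp]
  exact (hf.summable_of_abs_le h).subtype _ |>.tsum_le_tsum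
    (fun ℓ => cellSup_le_of_abs_le (hf.2.1 ℓ) h) (hf.2.2.subtype _)

end MixedNorm

lemma exists_hasCompactSupport_eqOn_abs_le {X : Type*} [TopologicalSpace X] [RegularSpace X]
    [LocallyCompactSpace X] {f : X → ℝ} (hf : Continuous f) {K : Set X} (hK : IsCompact K) :
    ∃ g : X → ℝ, Continuous g ∧ HasCompactSupport g ∧ EqOn g f K ∧
      (∀ x, |g x| ≤ |f x|) ∧ ∀ x, |f x - g x| ≤ |f x| := by
  obtain ⟨φ, hφK, -, hφc, hφ⟩ :=
    exists_continuous_one_zero_of_isCompact hK isClosed_empty (disjoint_empty _)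
  have hφ_abs (x : X) : |φ x| ≤ 1 := abs_le.2 ⟨by linarith [(hφ x).1], (hφ x).2⟩
  refine ⟨fun x => φ x * f x, φ.continuous.mul hf, hφc.mul_right,
    fun x hx => by simp [hφK hx], fun x => ?_, fun x => ?_⟩
  · rw [abs_mul]
    exact mul_le_of_le_one_left (abs_nonneg _) (hφ_abs x)
  · rw [← one_sub_mul, abs_mul]
    exact mul_le_of_le_one_left (abs_nonneg _)
      (abs_le.2 ⟨by linarith [(hφ x).2], by linarith [(hφ x).1]⟩)

theorem compactly_supported_dense_general {G : Type*} [AddCommGroup G] [TopologicalSpace G]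
    [IsTopologicalAddGroup G] [LocallyCompactSpace G]
    (L : AddSubgroup G)
    (B : Set G) (hBc : IsCompact (closure B)) :
    ∀ f : G → ℝ, MemX L B f → ∀ ε : ℝ, 0 < ε →
      ∃ g : G → ℝ, Continuous g ∧ HasCompactSupport g ∧ MemX L B g ∧
        MemX L B (fun x => f x - g x) ∧ normX L B (fun x => f x - g x) < ε := by
  intro f hf ε hε
  obtain ⟨F, hF⟩ : ∃ F : Finset L, ∑' ℓ : {ℓ : L // ℓ ∉ F}, cellSup B (ℓ : G) f < ε :=
    ((tendsto_tsum_compl_atTop_zero fun ℓ : L => cellSup B (ℓ : G) f).eventually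
      (gt_mem_nhds hε)).exists
  have hK : IsCompact (⋃ ℓ ∈ F, (· + (ℓ : G)) '' closure B) :=
    F.isCompact_biUnion fun ℓ _ => hBc.image (continuous_add_const _)
  obtain ⟨g, hgc, hgcs, hgf, hg, hfg⟩ := exists_hasCompactSupport_eqOn_abs_le hf.1 hK
  refine ⟨g, hgc, hgcs, hf.of_abs_le hgc hg, hf.of_abs_le (hf.1.sub hgc) hfg,
    (normX_le_tsum_compl_of_abs_le hf hfg F fun ℓ hℓ b hb => ?_).trans_lt hF⟩
  simp [hgf (mem_biUnion hℓ ⟨b, subset_closure hb, rfl⟩)]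

/-- `C_c(G;ℝ)` is dense in the mixed-norm space `X = C^{1,∞}(G;ℝ)`. -/
theorem compactly_supported_dense {G : Type*} [AddCommGroup G] [TopologicalSpace G]
    [IsTopologicalAddGroup G] [LocallyCompactSpace G] [T2Space G]
    [MeasurableSpace G] [BorelSpace G]
    (L : AddSubgroup G) (hLd : DiscreteTopology ↥L) (hLq : CompactSpace (G ⧸ L))
    (B : Set G) (hBm : MeasurableSet B) (hBc : IsCompact (closure B))
    (htile : ∀ g : G, ∃! p : ↥L × ↥B, (p.1 : G) + (p.2 : G) = g) :
    ∀ f : G → ℝ, MemX L B f → ∀ ε : ℝ, 0 < ε →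
      ∃ g : G → ℝ, Continuous g ∧ HasCompactSupport g ∧ MemX L B g ∧
        MemX L B (fun x => f x - g x) ∧ normX L B (fun x => f x - g x) < ε :=
  compactly_supported_dense_general L B hBc
end

section
/- Let G be a locally compact Abelian group, V a relatively compact open neighborhood of 0 with Haar measure μ(V) > 0, and r := (1/μ(V)) 𝟙_V ⋆ 𝟙_{−V}. Then for every x ∈ G the function r_x := 2r − r(· − x) − r(· + x) is positive definite. -/
/-!
The unnormalised triangle function `𝟙_V ⋆ 𝟙_{-V}` is `overlap y = μ(V ∩ (y + V))`, and by
translation invariance `⟪𝟙_{a+V}, 𝟙_{b+V}⟫ = overlap (b - a)` in `L²(μ)`. Hence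
`μ(V) · r_x(a - b) = 2 overlap (a - b) - overlap (a - b - x) - overlap (a - b + x) = ⟪φ b, φ a⟫`
for `φ a = 𝟙_{a+V} - 𝟙_{a+x+V}`, and a kernel of Gram form is positive definite:
`∑ cⱼ c̄ₖ ⟪φ xₖ, φ xⱼ⟫ = ‖∑ cⱼ φ xⱼ‖²`.
-/

open MeasureTheory Pointwise

/-- `f : G → ℝ` is positive definite with complex coefficients. -/
def IsPosDefFn {G : Type*} [AddCommGroup G] (f : G → ℝ) : Prop :=
  ∀ (n : ℕ) (x : Fin n → G) (c : Fin n → ℂ),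
    0 ≤ (∑ j, ∑ k, c j * (starRingEnd ℂ) (c k) * (f (x j - x k) : ℂ)).re ∧
      (∑ j, ∑ k, c j * (starRingEnd ℂ) (c k) * (f (x j - x k) : ℂ)).im = 0

open scoped InnerProductSpace ENNReal

section PositiveDefinite

variable {G : Type*} [AddCommGroup G]

theorem isPosDefFn_of_eq_inner {E : Type*} [NormedAddCommGroup E] [InnerProductSpace ℂ E]
    {f : G → ℝ} (φ : G → E) (hf : ∀ a b, (f (a - b) : ℂ) = ⟪φ b, φ a⟫_ℂ) : IsPosDefFn f := by
  intro n x c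
  have hsum : ∑ j, ∑ k, c j * starRingEnd ℂ (c k) * (f (x j - x k) : ℂ) =
      ⟪∑ j, c j • φ (x j), ∑ j, c j • φ (x j)⟫_ℂ := by
    rw [sum_inner, Finset.sum_comm]
    simp only [inner_sum, inner_smul_left, inner_smul_right, hf]
    exact Finset.sum_congr rfl fun _ _ => Finset.sum_congr rfl fun _ _ => by ring
  rw [hsum]
  exact ⟨inner_self_nonneg (𝕜 := ℂ), inner_self_im (𝕜 := ℂ) _⟩

theorem IsPosDefFn.const_mul {f : G → ℝ} (hf : IsPosDefFn f) {C : ℝ} (hC : 0 ≤ C) :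
    IsPosDefFn fun y => C * f y := by
  intro n x c
  have hsum : ∑ j, ∑ k, c j * starRingEnd ℂ (c k) * ((C * f (x j - x k) : ℝ) : ℂ) =
      C * ∑ j, ∑ k, c j * starRingEnd ℂ (c k) * (f (x j - x k) : ℂ) := by
    simp only [Finset.mul_sum, Complex.ofReal_mul]
    exact Finset.sum_congr rfl fun _ _ => Finset.sum_congr rfl fun _ _ => by ring
  rw [hsum, Complex.re_ofReal_mul, Complex.im_ofReal_mul]
  exact ⟨mul_nonneg hC (hf n x c).1, by rw [(hf n x c).2, mul_zero]⟩

end PositiveDefinite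

section Overlap

variable {G : Type*} [AddCommGroup G] [MeasurableSpace G] (μ : Measure G) {V : Set G}

def overlap (V : Set G) (y : G) : ℝ := μ.real (V ∩ (y +ᵥ V))

theorem integral_indicator_mul_indicator_neg_sub [MeasurableAdd G] (hV : MeasurableSet V) (y : G) :
    ∫ t, V.indicator (fun _ => (1 : ℝ)) t * (-V).indicator (fun _ => (1 : ℝ)) (y - t) ∂μ =
      overlap μ V y := by
  have hmem : ∀ t, y - t ∈ -V ↔ t ∈ y +ᵥ V := fun t => by
    rw [Set.mem_neg, neg_sub, Set.mem_vadd_set_iff_neg_vadd_mem, vadd_eq_add, neg_add_eq_sub]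
  have hind : ∀ t, V.indicator (fun _ => (1 : ℝ)) t * (-V).indicator (fun _ => (1 : ℝ)) (y - t) =
      (V ∩ (y +ᵥ V)).indicator 1 t := fun t => by
    by_cases h₁ : t ∈ V <;> by_cases h₂ : t ∈ y +ᵥ V <;> simp [h₁, h₂, hmem]
  simp_rw [hind]
  exact integral_indicator_one (hV.inter (hV.const_vadd y))

variable [μ.IsAddLeftInvariant]

theorem measureReal_vadd_inter_vadd (a b : G) :
    μ.real ((a +ᵥ V) ∩ (b +ᵥ V)) = overlap μ V (b - a) := by
  have : (a +ᵥ V) ∩ (b +ᵥ V) = a +ᵥ (V ∩ ((b - a) +ᵥ V)) := by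
    rw [Set.vadd_set_inter, vadd_vadd, add_sub_cancel]
  rw [this, overlap, measureReal_def, measureReal_def, measure_vadd]

variable [MeasurableAdd G] (hV : MeasurableSet V) (hμV : μ V ≠ ∞)

noncomputable def translateIndicatorL2 (a : G) : Lp ℂ 2 μ :=
  indicatorConstLp 2 (hV.const_vadd a) (by rwa [measure_vadd]) 1

theorem inner_translateIndicatorL2 (a b : G) :
    ⟪translateIndicatorL2 μ hV hμV a, translateIndicatorL2 μ hV hμV b⟫_ℂ = overlap μ V (b - a) := by
  simp only [translateIndicatorL2, L2.inner_indicatorConstLp_one_indicatorConstLp_one,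
    measureReal_vadd_inter_vadd, RCLike.ofReal_eq_complex_ofReal]

include hV hμV in
theorem isPosDefFn_two_mul_overlap_sub_overlap_sub_overlap_add (x : G) :
    IsPosDefFn fun y => 2 * overlap μ V y - overlap μ V (y - x) - overlap μ V (y + x) := by
  refine isPosDefFn_of_eq_inner
    (fun a => translateIndicatorL2 μ hV hμV a - translateIndicatorL2 μ hV hμV (a + x)) fun a b => ?_
  simp only [inner_sub_left, inner_sub_right, inner_translateIndicatorL2]
  rw [add_sub_add_right_eq_sub, sub_add_eq_sub_sub, add_sub_right_comm]
  push_cast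
  ring

end Overlap

theorem triangle_difference_posdef_general {G : Type*} [AddCommGroup G] [TopologicalSpace G]
    [IsTopologicalAddGroup G]
    [MeasurableSpace G] [BorelSpace G]
    (μ : Measure G) [μ.IsAddHaarMeasure]
    (V : Set G) (hVo : IsOpen V) (hVc : IsCompact (closure V)) :
    let r : G → ℝ := fun y => (μ V).toReal⁻¹ *
      ∫ t, V.indicator (fun _ => (1 : ℝ)) t * (-V).indicator (fun _ => (1 : ℝ)) (y - t) ∂μ
    ∀ x : G, IsPosDefFn (fun y => 2 * r y - r (y - x) - r (y + x)) := by
  intro r x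
  have hV : MeasurableSet V := hVo.measurableSet
  have hμV : μ V ≠ ∞ := ((measure_mono subset_closure).trans_lt hVc.measure_lt_top).ne
  have hr : ∀ y, r y = (μ.real V)⁻¹ * overlap μ V y := fun y => by
    rw [← integral_indicator_mul_indicator_neg_sub μ hV y, measureReal_def]
  simp only [hr]
  convert (isPosDefFn_two_mul_overlap_sub_overlap_sub_overlap_add μ hV hμV x).const_mul
    (inv_nonneg.2 measureReal_nonneg) using 2
  ring

/-- For the generalized triangle function `r = (1/μ(V)) 𝟙_V ⋆ 𝟙_{−V}` and any `x ∈ G`,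
the function `r_x := 2r − r(· − x) − r(· + x)` is positive definite. -/
theorem triangle_difference_posdef {G : Type*} [AddCommGroup G] [TopologicalSpace G]
    [IsTopologicalAddGroup G] [LocallyCompactSpace G] [T2Space G]
    [MeasurableSpace G] [BorelSpace G]
    (μ : Measure G) [μ.IsAddHaarMeasure]
    (V : Set G) (hVo : IsOpen V) (hVc : IsCompact (closure V)) (h0V : (0 : G) ∈ V)
    (hVpos : 0 < μ V) :
    let r : G → ℝ := fun y => (μ V).toReal⁻¹ *
      ∫ t, V.indicator (fun _ => (1 : ℝ)) t * (-V).indicator (fun _ => (1 : ℝ)) (y - t) ∂μ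
    ∀ x : G, IsPosDefFn (fun y => 2 * r y - r (y - x) - r (y + x)) :=
  triangle_difference_posdef_general μ V hVo hVc
end
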